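/- Let M, M_c > 0, L₀ > 0, 0 < k ≤ l, and let H_C(f) = E_kin(f) + E_pot(f) + C(f) be the energy–Casimir functional on the constraint set F_M. Then there is a constant C > 0 such that H_C(f) ≥ (1/2)(E_kin(f) + C(f)) − C for all f ∈ F_M; in particular h_M := inf_{F_M} H_C > −∞. -/

import Mathlib

open MeasureTheory Real

noncomputable section

abbrev E3 := EuclideanSpace ℝ (Fin 3)

def Lfun (x v : E3) : ℝ := ‖x‖ ^ 2 * ‖v‖ ^ 2 - (inner ℝ x v : ℝ) ^ 2

/-- The spatial density induced by a phase-space density. -/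
def rhoF (f : E3 → E3 → ℝ) (x : E3) : ℝ := ∫ v, f x v

def mF (f : E3 → E3 → ℝ) (r : ℝ) : ℝ := ∫ x in Metric.closedBall (0 : E3) r, rhoF f x

/-- The radial gradient field `∇U_f(x) = (m(|x|)/|x|²) x/|x|`. -/
def gradUF (f : E3 → E3 → ℝ) (x : E3) : E3 := (mF f ‖x‖ / ‖x‖ ^ 3) • x

/-- The potential `U_f(x) = −∫_{|x|}^∞ m(s)/s² ds`. -/
def UF (f : E3 → E3 → ℝ) (x : E3) : ℝ := -∫ s in Set.Ioi ‖x‖, mF f s / s ^ 2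

/-- Kinetic energy. -/
def Ekin (f : E3 → E3 → ℝ) : ℝ := (1/2) * ∫ x, ∫ v, ‖v‖ ^ 2 * f x v

/-- Potential energy, including the interaction with the central point mass `M_c`. -/
def Epot (M_c : ℝ) (f : E3 → E3 → ℝ) : ℝ :=
  -(1 / (8 * π)) * (∫ x, ‖gradUF f x‖ ^ 2) - ∫ x, (M_c / ‖x‖) * rhoF f x

/-- The Casimir functional. -/
def Cas (k l L₀ : ℝ) (f : E3 → E3 → ℝ) : ℝ :=
  ∫ x, ∫ v, f x v ^ (1 + 1 / k) * (max (Lfun x v - L₀) 0) ^ (-(l / k))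

/-- The energy–Casimir functional. -/
def HC (k l L₀ M_c : ℝ) (f : E3 → E3 → ℝ) : ℝ := Ekin f + Epot M_c f + Cas k l L₀ f

/-- The constraint set `F_M`. -/
def FM (k l L₀ M : ℝ) (f : E3 → E3 → ℝ) : Prop :=
  Measurable (Function.uncurry f) ∧ (∀ x v, 0 ≤ f x v) ∧
  (∀ (A : E3 ≃ₗᵢ[ℝ] E3) (x v : E3), f (A x) (A v) = f x v) ∧
  Integrable (Function.uncurry f) ∧ (∫ x, ∫ v, f x v) = M ∧
  Integrable (fun z : E3 × E3 => ‖z.2‖ ^ 2 * f z.1 z.2) ∧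
  Integrable (fun z : E3 × E3 =>
    f z.1 z.2 ^ (1 + 1 / k) * (max (Lfun z.1 z.2 - L₀) 0) ^ (-(l / k))) ∧
  (∀ᵐ z : E3 × E3, Lfun z.1 z.2 < L₀ → f z.1 z.2 = 0)

section Aux

open Metric Set
open scoped Pointwise ENNReal

lemma g2_meas : Measurable (fun x : E3 => ENNReal.ofReal (‖x‖ ^ 2)⁻¹) :=
  ((measurable_norm.pow_const 2).inv).ennreal_ofReal

lemma finrank_E3 : Module.finrank ℝ E3 = 3 := finrank_euclideanSpace_fin

lemma lint_scale {c : ℝ} (hc : 0 < c) (s : Set E3) (hs : MeasurableSet s) :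
    ∫⁻ x in c • s, ENNReal.ofReal (‖x‖ ^ 2)⁻¹
      = ENNReal.ofReal c * ∫⁻ x in s, ENNReal.ofReal (‖x‖ ^ 2)⁻¹ := by
  have hc0 : c ≠ 0 := hc.ne'
  have hmap := Measure.map_addHaar_smul (volume : Measure E3) hc0
  have hs2 : MeasurableSet (c • s) := hs.const_smul₀ c
  have key : ∫⁻ y in c • s, ENNReal.ofReal (‖y‖ ^ 2)⁻¹
        ∂(Measure.map (c • · : E3 → E3) volume)
      = ∫⁻ x in (c • · : E3 → E3) ⁻¹' (c • s), ENNReal.ofReal (‖c • x‖ ^ 2)⁻¹ :=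
    setLIntegral_map hs2 g2_meas (measurable_const_smul c)
  have hpre : (c • · : E3 → E3) ⁻¹' (c • s) = s := by
    rw [preimage_smul₀ hc0, inv_smul_smul₀ hc0]
  rw [hmap, hpre] at key
  have hptwise : ∀ x : E3, ENNReal.ofReal (‖c • x‖ ^ 2)⁻¹
      = ENNReal.ofReal (c ^ 2)⁻¹ * ENNReal.ofReal (‖x‖ ^ 2)⁻¹ := by
    intro x
    rw [norm_smul, Real.norm_eq_abs, mul_pow, sq_abs, mul_inv,
      ENNReal.ofReal_mul (by positivity)]
  simp only [hptwise] at key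
  rw [lintegral_const_mul _ g2_meas] at key
  rw [Measure.restrict_smul, lintegral_smul_measure] at key
  have h3 : (ENNReal.ofReal |(c ^ Module.finrank ℝ E3)⁻¹|) = ENNReal.ofReal (c^3)⁻¹ := by
    rw [finrank_E3, abs_of_nonneg (by positivity)]
  rw [h3] at key
  have hmul : ENNReal.ofReal (c ^ 3) * ENNReal.ofReal (c ^ 3)⁻¹ = 1 := by
    rw [← ENNReal.ofReal_mul (by positivity), mul_inv_cancel₀ (by positivity), ENNReal.ofReal_one]
  calc ∫⁻ x in c • s, ENNReal.ofReal (‖x‖ ^ 2)⁻¹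
      = ENNReal.ofReal (c ^ 3) * (ENNReal.ofReal (c ^ 3)⁻¹
          * ∫⁻ x in c • s, ENNReal.ofReal (‖x‖ ^ 2)⁻¹) := by
        rw [← mul_assoc, hmul, one_mul]
    _ = ENNReal.ofReal (c ^ 3) * (ENNReal.ofReal (c ^ 2)⁻¹
          * ∫⁻ x in s, ENNReal.ofReal (‖x‖ ^ 2)⁻¹) := by rw [smul_eq_mul] at key; rw [key]
    _ = ENNReal.ofReal c * ∫⁻ x in s, ENNReal.ofReal (‖x‖ ^ 2)⁻¹ := by
        rw [← mul_assoc, ← ENNReal.ofReal_mul (by positivity)]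
        congr 2
        field_simp

lemma lint_ball_one_lt_top :
    ∫⁻ x in closedBall (0:E3) 1, ENNReal.ofReal (‖x‖ ^ 2)⁻¹ < ⊤ := by
  set g : E3 → ℝ≥0∞ := fun x => ENNReal.ofReal (‖x‖ ^ 2)⁻¹ with hg
  set S : Set E3 := closedBall 0 1 \ closedBall 0 (1/2) with hS
  set T : ℕ → Set E3 := fun n => closedBall 0 ((1/2:ℝ)^n) \ closedBall 0 ((1/2:ℝ)^(n+1)) with hT
  have hSmeas : MeasurableSet S := measurableSet_closedBall.diff measurableSet_closedBall
  have hTsm : ∀ n, T n = ((1/2:ℝ)^n) • S := by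
    intro n
    rw [hS, smul_set_sdiff₀ (by positivity : ((1/2:ℝ)^n) ≠ 0),
      smul_closedBall' (by positivity : ((1/2:ℝ)^n) ≠ 0),
      smul_closedBall' (by positivity : ((1/2:ℝ)^n) ≠ 0), smul_zero]
    rw [hT]
    norm_num [abs_of_pos, pow_succ]
  have hTmeas : ∀ n, MeasurableSet (T n) :=
    fun n => measurableSet_closedBall.diff measurableSet_closedBall
  have hTdisj : Pairwise (Function.onFun Disjoint T) := by
    intro m n hmn
    rcases lt_or_gt_of_ne hmn with h | h
    · refine Set.disjoint_left.2 fun x hxm hxn => ?_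
      have h1 : ‖x‖ ≤ (1/2:ℝ)^n := by
        simpa [hT, dist_eq_norm] using hxn.1
      have h2 : ¬ (‖x‖ ≤ (1/2:ℝ)^(m+1)) := by
        simpa [hT, dist_eq_norm] using hxm.2
      exact h2 (h1.trans (pow_le_pow_of_le_one (by norm_num) (by norm_num) h))
    · refine Set.disjoint_left.2 fun x hxm hxn => ?_
      have h1 : ‖x‖ ≤ (1/2:ℝ)^m := by
        simpa [hT, dist_eq_norm] using hxm.1
      have h2 : ¬ (‖x‖ ≤ (1/2:ℝ)^(n+1)) := by
        simpa [hT, dist_eq_norm] using hxn.2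
      exact h2 (h1.trans (pow_le_pow_of_le_one (by norm_num) (by norm_num) h))
  have hTunion : (⋃ n, T n) = closedBall (0:E3) 1 \ {0} := by
    ext x
    simp only [mem_iUnion, hT, mem_diff, mem_closedBall, dist_zero_right, mem_singleton_iff]
    constructor
    · rintro ⟨n, h1, h2⟩
      refine ⟨h1.trans (pow_le_one₀ (by norm_num) (by norm_num)), ?_⟩
      rintro rfl
      simp only [norm_zero] at h2
      exact h2 (by positivity)
    · rintro ⟨h1, h2⟩
      have hx0 : 0 < ‖x‖ := norm_pos_iff.2 h2
      have hex : ∃ m, (1/2:ℝ)^m < ‖x‖ := exists_pow_lt_of_lt_one hx0 (by norm_num : (1/2:ℝ) < 1)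
      have hmin := Nat.find_spec hex
      set n₀ := Nat.find hex with hn₀
      have hn₀pos : 0 < n₀ := by
        rcases Nat.eq_zero_or_pos n₀ with h | h
        swap
        · exact h
        · exfalso
          have := hmin
          rw [h] at this
          simp at this
          linarith
      refine ⟨n₀ - 1, ?_, ?_⟩
      · have hlt : n₀ - 1 < n₀ := Nat.sub_lt hn₀pos one_pos
        have := Nat.find_min hex (hn₀ ▸ hlt)
        rw [← hn₀] at this
        simpa using not_lt.1 this
      · rw [Nat.sub_add_cancel hn₀pos]
        exact not_le.2 hmin
  have haS : ∫⁻ x in S, g x ≤ ENNReal.ofReal 4 * volume (closedBall (0:E3) 1) := by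
    calc ∫⁻ x in S, g x ≤ ∫⁻ _ in S, ENNReal.ofReal 4 := by
          refine setLIntegral_mono measurable_const fun x hx => ?_
          refine ENNReal.ofReal_le_ofReal ?_
          have hx2 : (1/2:ℝ) ≤ ‖x‖ := by
            by_contra hcon
            exact hx.2 (by simpa [dist_eq_norm] using (not_le.1 hcon).le)
          rw [inv_le_comm₀ (by positivity) (by norm_num)]
          nlinarith
      _ = ENNReal.ofReal 4 * volume S := by rw [setLIntegral_const]
      _ ≤ ENNReal.ofReal 4 * volume (closedBall (0:E3) 1) := by
          gcongr
          exact diff_subset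
  have hvol : volume (closedBall (0:E3) 1) < ⊤ := measure_closedBall_lt_top
  have hzero : ∫⁻ x in closedBall (0:E3) 1, g x = ∫⁻ x in closedBall (0:E3) 1 \ {0}, g x := by
    refine (setLIntegral_congr ?_).symm
    rw [diff_ae_eq_self]
    exact measure_mono_null inter_subset_right (measure_singleton 0)
  rw [hzero, ← hTunion, lintegral_iUnion hTmeas hTdisj]
  have hterm : ∀ n, ∫⁻ x in T n, g x = ENNReal.ofReal ((1/2:ℝ)^n) * ∫⁻ x in S, g x := by
    intro n
    rw [hTsm n]
    exact lint_scale (by positivity) S hSmeas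
  calc ∑' n, ∫⁻ x in T n, g x
      = ∑' n, ENNReal.ofReal ((1/2:ℝ)^n) * ∫⁻ x in S, g x := tsum_congr hterm
    _ = (∑' n, ENNReal.ofReal ((1/2:ℝ)^n)) * ∫⁻ x in S, g x := ENNReal.tsum_mul_right
    _ ≤ (∑' n, ENNReal.ofReal ((1/2:ℝ)^n)) * (ENNReal.ofReal 4 * volume (closedBall (0:E3) 1)) := by
        gcongr
    _ < ⊤ := by
        refine ENNReal.mul_lt_top ?_ (ENNReal.mul_lt_top ENNReal.ofReal_lt_top hvol)
        have : (∑' n, ENNReal.ofReal ((1/2:ℝ)^n)) = ENNReal.ofReal 2 := by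
          rw [← ENNReal.ofReal_tsum_of_nonneg (fun n => by positivity)
            (summable_geometric_of_lt_one (by norm_num) (by norm_num)), tsum_geometric_two]
        rw [this]
        exact ENNReal.ofReal_lt_top

lemma exists_good_R (ε : ℝ) (hε : 0 < ε) :
    ∃ R : ℝ, 0 < R ∧ R ≤ 1 ∧
      IntegrableOn (fun x : E3 => (‖x‖ ^ 2)⁻¹) (closedBall 0 R) ∧
      ∫ x in closedBall (0:E3) R, (‖x‖ ^ 2)⁻¹ ≤ ε := by
  set K1 := ∫⁻ x in closedBall (0:E3) 1, ENNReal.ofReal (‖x‖ ^ 2)⁻¹ with hK1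
  obtain ⟨N, hN⟩ : ∃ N : ℕ, (1/2:ℝ)^N < ε / (K1.toReal + 1) :=
    exists_pow_lt_of_lt_one (by positivity) (by norm_num)
  set R : ℝ := (1/2:ℝ)^N with hR
  have hRpos : 0 < R := by positivity
  have hball : closedBall (0:E3) R = R • closedBall (0:E3) 1 := by
    rw [smul_closedBall' hRpos.ne', smul_zero, Real.norm_eq_abs, abs_of_pos hRpos, mul_one]
  have hscale : ∫⁻ x in closedBall (0:E3) R, ENNReal.ofReal (‖x‖ ^ 2)⁻¹
      = ENNReal.ofReal R * K1 := by
    rw [hball]; exact lint_scale hRpos _ measurableSet_closedBall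
  have hfin : ∫⁻ x in closedBall (0:E3) R, ENNReal.ofReal (‖x‖ ^ 2)⁻¹ < ⊤ := by
    rw [hscale]; exact ENNReal.mul_lt_top ENNReal.ofReal_lt_top lint_ball_one_lt_top
  have hint : IntegrableOn (fun x : E3 => (‖x‖ ^ 2)⁻¹) (closedBall 0 R) := by
    refine ⟨((measurable_norm.pow_const 2).inv).aestronglyMeasurable, ?_⟩
    rw [hasFiniteIntegral_iff_ofReal (ae_of_all _ fun x => by positivity)]
    exact hfin
  refine ⟨R, hRpos, pow_le_one₀ (by norm_num) (by norm_num), hint, ?_⟩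
  have hval : ∫ x in closedBall (0:E3) R, (‖x‖ ^ 2)⁻¹
      = (ENNReal.ofReal R * K1).toReal := by
    rw [integral_eq_lintegral_of_nonneg_ae (f := fun x : E3 => (‖x‖ ^ 2)⁻¹) (ae_of_all _ fun x => by positivity)
      ((measurable_norm.pow_const 2).inv).aestronglyMeasurable, hscale]
  rw [hval, ENNReal.toReal_mul, ENNReal.toReal_ofReal hRpos.le]
  have h1 : R * K1.toReal ≤ R * (K1.toReal + 1) := by
    have : 0 ≤ K1.toReal := ENNReal.toReal_nonneg
    nlinarith
  have h2 : R * (K1.toReal + 1) < ε := by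
    rw [lt_div_iff₀ (by positivity)] at hN
    linarith
  linarith

lemma outer_ptwise {R : ℝ} (hR : 0 < R) {x : E3} (hx : R ≤ ‖x‖) :
    (‖x‖ ^ 4)⁻¹ ≤ ((R ^ 2)⁻¹ + 1) ^ 2 * ((1:ℝ) + ‖x‖ ^ 2) ^ (-(4:ℝ)/2) := by
  have ha : 0 < ‖x‖ := hR.trans_le hx
  have hrw : ((1:ℝ) + ‖x‖ ^ 2) ^ (-(4:ℝ)/2) = (((1:ℝ) + ‖x‖ ^ 2) ^ (2:ℕ))⁻¹ := by
    rw [show (-(4:ℝ)/2) = -(2:ℕ) by norm_num, Real.rpow_neg (by positivity), Real.rpow_natCast]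
  rw [hrw]
  have h1 : 1 + ‖x‖ ^ 2 ≤ ((R ^ 2)⁻¹ + 1) * ‖x‖ ^ 2 := by
    have hle : 1 ≤ (R ^ 2)⁻¹ * ‖x‖ ^ 2 := by
      rw [inv_mul_eq_div, le_div_iff₀ (by positivity)]
      nlinarith
    nlinarith
  have h2 : ((1:ℝ) + ‖x‖ ^ 2) ^ (2:ℕ) ≤ ((R ^ 2)⁻¹ + 1) ^ 2 * ‖x‖ ^ 4 := by
    calc ((1:ℝ) + ‖x‖ ^ 2) ^ (2:ℕ) ≤ (((R ^ 2)⁻¹ + 1) * ‖x‖ ^ 2) ^ (2:ℕ) :=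
          pow_le_pow_left₀ (by positivity) h1 2
      _ = ((R ^ 2)⁻¹ + 1) ^ 2 * ‖x‖ ^ 4 := by ring
  have hb : (0:ℝ) < (1 + ‖x‖ ^ 2) ^ 2 := by positivity
  have h4 : (0:ℝ) < ‖x‖ ^ 4 := by positivity
  rw [show ((R ^ 2)⁻¹ + 1) ^ 2 * (((1:ℝ) + ‖x‖ ^ 2) ^ (2:ℕ))⁻¹
      = ((R ^ 2)⁻¹ + 1) ^ 2 / ((1:ℝ) + ‖x‖ ^ 2) ^ 2 from (div_eq_mul_inv _ _).symm,
    show (‖x‖ ^ 4)⁻¹ = 1 / ‖x‖ ^ 4 from (one_div _).symm, div_le_div_iff₀ h4 hb]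
  nlinarith [h2]

end Aux

section Main
open Metric Set
open scoped ENNReal

set_option maxHeartbeats 2000000 in
theorem HC_lower_bound (k l L₀ M M_c : ℝ) (hk : 0 < k) (hkl : k ≤ l)
    (hL₀ : 0 < L₀) (hM : 0 < M) (hMc : 0 < M_c) :
    ∃ C > 0,
      (∀ f, FM k l L₀ M f →
        HC k l L₀ M_c f ≥ (1/2) * (Ekin f + Cas k l L₀ f) - C) ∧
      BddBelow (HC k l L₀ M_c '' {f | FM k l L₀ M f}) := by
  have hπ : (0:ℝ) < π := Real.pi_pos
  obtain ⟨R, hR0, hR1, hRint, hRval⟩ := exists_good_R (π * L₀ / M) (by positivity)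
  set ψ : E3 → ℝ := fun x => ((1:ℝ) + ‖x‖ ^ 2) ^ (-(4:ℝ)/2) with hψ
  have hψint : Integrable ψ := by
    have : ((Module.finrank ℝ E3 : ℝ)) < 4 := by rw [finrank_E3]; norm_num
    exact integrable_rpow_neg_one_add_norm_sq this
  have hψnn : ∀ x, 0 ≤ ψ x := fun x => Real.rpow_nonneg (by positivity) _
  set Jψ : ℝ := ∫ x, ψ x with hJψdef
  have hJψ : 0 ≤ Jψ := integral_nonneg hψnn
  set cR : ℝ := ((R ^ 2)⁻¹ + 1) ^ 2 with hcR
  have hcR0 : 0 < cR := by positivity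
  set C : ℝ := (1/(8*π)) * (M^2 * cR * Jψ) + 2 * M_c^2 * M / L₀ + 1 with hC
  have hC0 : 0 < C := by
    have h1 : 0 ≤ (1/(8*π)) * (M^2 * cR * Jψ) := by
      refine mul_nonneg (by positivity) (mul_nonneg (by positivity) hJψ)
    have h2 : 0 ≤ 2 * M_c^2 * M / L₀ := by positivity
    rw [hC]
    linarith
  have main : ∀ f, FM k l L₀ M f →
      HC k l L₀ M_c f ≥ (1/2) * (Ekin f + Cas k l L₀ f) - C := by
    intro f hf
    obtain ⟨hmeas, hnn, _hsym, hint, hmass, hkin, _hcas, hsupp⟩ := hf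
    have hEk : 0 ≤ Ekin f :=
      mul_nonneg (by norm_num)
        (integral_nonneg fun x => integral_nonneg fun v => mul_nonneg (by positivity) (hnn x v))
    have hCa : 0 ≤ Cas k l L₀ f :=
      integral_nonneg fun x => integral_nonneg fun v =>
        mul_nonneg (Real.rpow_nonneg (hnn x v) _) (Real.rpow_nonneg (le_max_right _ _) _)
    -- product-measure versions
    have hintP : Integrable (Function.uncurry f) ((volume : Measure E3).prod volume) := by
      rwa [← Measure.volume_eq_prod E3 E3]
    have hkinP : Integrable (fun z : E3 × E3 => ‖z.2‖ ^ 2 * f z.1 z.2)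
        ((volume : Measure E3).prod volume) := by rwa [← Measure.volume_eq_prod E3 E3]
    have hsuppP : ∀ᵐ z : E3 × E3 ∂((volume : Measure E3).prod volume),
        Lfun z.1 z.2 < L₀ → f z.1 z.2 = 0 := by rwa [← Measure.volume_eq_prod E3 E3]
    have hintP' : Integrable (fun z : E3 × E3 => f z.1 z.2) ((volume : Measure E3).prod volume) :=
      hintP
    -- density and kinetic-density marginals
    have hρ0 : ∀ x, 0 ≤ rhoF f x := fun x => integral_nonneg fun v => hnn x v
    have hρint : Integrable (rhoF f) := by
      have := hintP.integral_prod_left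
      exact this
    have hρtot : ∫ x, rhoF f x = M := hmass
    set K : E3 → ℝ := fun x => ∫ v, ‖v‖ ^ 2 * f x v with hKdef
    have hK0 : ∀ x, 0 ≤ K x := fun x =>
      integral_nonneg fun v => mul_nonneg (by positivity) (hnn x v)
    have hKint : Integrable K := by
      have := hkinP.integral_prod_left
      simpa using this
    have hKtot : ∫ x, K x = 2 * Ekin f := by
      have : Ekin f = (1/2) * ∫ x, K x := rfl
      linarith
    -- a.e. pointwise domination of the density
    have hae1 : ∀ᵐ x : E3, rhoF f x ≤ (‖x‖ ^ 2 / L₀) * K x := by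
      filter_upwards [hintP.prod_right_ae, hkinP.prod_right_ae,
        Measure.ae_ae_of_ae_prod hsuppP] with x hfx hkx hLx
      have hfx' : Integrable (fun v => f x v) := by
        simpa [Function.uncurry] using hfx
      have step : ∀ᵐ v : E3, f x v ≤ (‖x‖ ^ 2 / L₀) * (‖v‖ ^ 2 * f x v) := by
        filter_upwards [hLx] with v hv
        rcases eq_or_ne (f x v) 0 with h0 | h0
        · simp [h0]
        · have hL : L₀ ≤ Lfun x v := not_lt.1 fun hcon => h0 (hv hcon)
          have hL2 : L₀ ≤ ‖x‖ ^ 2 * ‖v‖ ^ 2 := by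
            have hsq := sq_nonneg (inner ℝ x v : ℝ)
            simp only [Lfun] at hL
            linarith
          rw [div_mul_eq_mul_div, le_div_iff₀ hL₀]
          nlinarith [hnn x v]
      calc rhoF f x = ∫ v, f x v := rfl
        _ ≤ ∫ v, (‖x‖ ^ 2 / L₀) * (‖v‖ ^ 2 * f x v) :=
            integral_mono_ae hfx' (hkx.const_mul _) step
        _ = (‖x‖ ^ 2 / L₀) * K x := integral_const_mul _ _
    -- bounds on the mass function
    have hm0 : ∀ r : ℝ, 0 ≤ mF f r := fun r =>
      setIntegral_nonneg measurableSet_closedBall fun x _ => hρ0 x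
    have hmM : ∀ r : ℝ, mF f r ≤ M := fun r => by
      rw [← hρtot]
      exact setIntegral_le_integral hρint (ae_of_all _ hρ0)
    have hmE : ∀ r : ℝ, mF f r ≤ (r ^ 2 / L₀) * (2 * Ekin f) := by
      intro r
      have step1 : mF f r ≤ ∫ x in closedBall (0:E3) r, (r ^ 2 / L₀) * K x := by
        refine integral_mono_ae hρint.integrableOn ((hKint.const_mul _).integrableOn) ?_
        filter_upwards [ae_restrict_mem measurableSet_closedBall, ae_restrict_of_ae hae1]
          with x hxb hx
        have hxr : ‖x‖ ≤ r := by simpa [dist_eq_norm] using hxb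
        refine hx.trans ?_
        have hx2 : ‖x‖ ^ 2 ≤ r ^ 2 := by nlinarith [norm_nonneg x]
        have := hK0 x
        have hdiv : ‖x‖ ^ 2 / L₀ ≤ r ^ 2 / L₀ := by
          gcongr
        exact mul_le_mul_of_nonneg_right hdiv (hK0 x)
      have step2 : ∫ x in closedBall (0:E3) r, (r ^ 2 / L₀) * K x
          = (r ^ 2 / L₀) * ∫ x in closedBall (0:E3) r, K x := integral_const_mul _ _
      have step3 : ∫ x in closedBall (0:E3) r, K x ≤ ∫ x, K x :=
        setIntegral_le_integral hKint (ae_of_all _ hK0)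
      have hr2 : 0 ≤ r ^ 2 / L₀ := by positivity
      calc mF f r ≤ (r ^ 2 / L₀) * ∫ x in closedBall (0:E3) r, K x := by
            rw [← step2]; exact step1
        _ ≤ (r ^ 2 / L₀) * ∫ x, K x := mul_le_mul_of_nonneg_left step3 hr2
        _ = (r ^ 2 / L₀) * (2 * Ekin f) := by rw [hKtot]
    -- Claim A : the central-mass potential term
    have claimA : (∫ x, (M_c / ‖x‖) * rhoF f x)
        ≤ (1/4) * Ekin f + 2 * M_c^2 * M / L₀ := by
      set g1 : E3 × E3 → ℝ := fun z => (M_c / ‖z.1‖) * f z.1 z.2 with hg1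
      set h1 : E3 × E3 → ℝ := fun z => (‖z.2‖ ^ 2 / 8 + 2 * M_c ^ 2 / L₀) * f z.1 z.2 with hh1
      have hh1eq : h1 = fun z : E3 × E3 =>
          (1/8) * (‖z.2‖ ^ 2 * f z.1 z.2) + (2 * M_c ^ 2 / L₀) * f z.1 z.2 := by
        funext z
        simp only [hh1]
        ring
      have hh1int : Integrable h1 ((volume : Measure E3).prod volume) := by
        rw [hh1eq]
        exact (hkinP.const_mul _).add (hintP'.const_mul _)
      have hg1meas : AEStronglyMeasurable g1 ((volume : Measure E3).prod volume) :=
        ((measurable_const.div (measurable_norm.comp measurable_fst)).mul hmeas).aestronglyMeasurable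
      have hg1nn : ∀ z, 0 ≤ g1 z := fun z =>
        mul_nonneg (div_nonneg hMc.le (norm_nonneg _)) (hnn _ _)
      have haeg : ∀ᵐ z ∂((volume : Measure E3).prod volume), g1 z ≤ h1 z := by
        filter_upwards [hsuppP] with z hz
        rcases eq_or_ne (f z.1 z.2) 0 with h0 | h0
        · simp [hg1, hh1, h0]
        · have hL : L₀ ≤ Lfun z.1 z.2 := not_lt.1 fun hcon => h0 (hz hcon)
          have hL2 : L₀ ≤ ‖z.1‖ ^ 2 * ‖z.2‖ ^ 2 := by
            have hsq := sq_nonneg (inner ℝ z.1 z.2 : ℝ)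
            simp only [Lfun] at hL
            linarith
          have ha : 0 < ‖z.1‖ := by
            rcases eq_or_lt_of_le (norm_nonneg z.1) with h | h
            · exfalso; rw [← h] at hL2; simp at hL2; nlinarith
            · exact h
          have key : M_c / ‖z.1‖ ≤ ‖z.2‖ ^ 2 / 8 + 2 * M_c ^ 2 / L₀ := by
            set s := Real.sqrt L₀ with hs
            have hs2 : s ^ 2 = L₀ := Real.sq_sqrt hL₀.le
            have hs0 : 0 < s := Real.sqrt_pos.2 hL₀
            have hab : s ≤ ‖z.1‖ * ‖z.2‖ := by
              have h1' : s ≤ Real.sqrt (‖z.1‖ ^ 2 * ‖z.2‖ ^ 2) := Real.sqrt_le_sqrt hL2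
              have h2' : Real.sqrt (‖z.1‖ ^ 2 * ‖z.2‖ ^ 2) = ‖z.1‖ * ‖z.2‖ := by
                rw [show ‖z.1‖ ^ 2 * ‖z.2‖ ^ 2 = (‖z.1‖ * ‖z.2‖) ^ 2 by ring,
                  Real.sqrt_sq (by positivity)]
              rwa [h2'] at h1'
            have keypoly : 8 * L₀ * M_c ≤ L₀ * ‖z.1‖ * ‖z.2‖ ^ 2 + 16 * ‖z.1‖ * M_c ^ 2 := by
              rw [← hs2]
              nlinarith [mul_nonneg ha.le (sq_nonneg (s * ‖z.2‖ - 4 * M_c)),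
                mul_le_mul_of_nonneg_left hab (by positivity : (0:ℝ) ≤ 8 * M_c * s)]
            rw [div_le_iff₀ ha, ← sub_nonneg]
            have expand : (‖z.2‖ ^ 2 / 8 + 2 * M_c ^ 2 / L₀) * ‖z.1‖ - M_c
                = (L₀ * ‖z.1‖ * ‖z.2‖ ^ 2 + 16 * ‖z.1‖ * M_c ^ 2 - 8 * L₀ * M_c) / (8 * L₀) := by
              field_simp
              ring
            rw [expand]
            exact div_nonneg (by linarith) (by positivity)
          exact mul_le_mul_of_nonneg_right key (hnn _ _)
      have hg1int : Integrable g1 ((volume : Measure E3).prod volume) := by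
        refine Integrable.mono' hh1int hg1meas ?_
        filter_upwards [haeg] with z hz
        rw [Real.norm_eq_abs, abs_of_nonneg (hg1nn z)]
        exact hz
      have hAeq : (∫ x, (M_c / ‖x‖) * rhoF f x)
          = ∫ z, g1 z ∂((volume : Measure E3).prod volume) := by
        have hpt : ∀ x : E3, (M_c / ‖x‖) * rhoF f x = ∫ v, g1 (x, v) := fun x =>
          (integral_const_mul _ _).symm
        rw [show (∫ x, (M_c / ‖x‖) * rhoF f x) = ∫ x, ∫ v, g1 (x, v) from by
          simp only [hpt]]
        exact integral_integral (f := fun x v => (M_c / ‖x‖) * f x v) hg1int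
      have hmono : ∫ z, g1 z ∂((volume : Measure E3).prod volume)
          ≤ ∫ z, h1 z ∂((volume : Measure E3).prod volume) :=
        integral_mono_ae hg1int hh1int haeg
      have hkinProd : ∫ z, ‖z.2‖ ^ 2 * f z.1 z.2 ∂((volume : Measure E3).prod volume)
          = 2 * Ekin f := by
        rw [← integral_integral (f := fun x v => ‖v‖ ^ 2 * f x v) hkinP]
        have : Ekin f = (1/2) * ∫ x, ∫ v, ‖v‖ ^ 2 * f x v := rfl
        rw [this]
        ring
      have hmassProd : ∫ z : E3 × E3, f z.1 z.2 ∂((volume : Measure E3).prod volume) = M := by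
        rw [← integral_integral (f := fun x v => f x v) hintP']
        exact hmass
      have hh1val : ∫ z, h1 z ∂((volume : Measure E3).prod volume)
          = (1/4) * Ekin f + 2 * M_c ^ 2 * M / L₀ := by
        rw [hh1eq, integral_add (hkinP.const_mul _) (hintP'.const_mul _),
          integral_const_mul, integral_const_mul, hkinProd, hmassProd]
        ring
      rw [hAeq]
      rw [hh1val] at hmono
      exact hmono
    -- Claim B : the field-energy term
    have claimB : (1/(8*π)) * (∫ x, ‖gradUF f x‖ ^ 2)
        ≤ (1/4) * Ekin f + (1/(8*π)) * (M^2 * cR * Jψ) := by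
      have hcoef : 0 ≤ (1/(8*π)) := by positivity
      by_cases hB : Integrable (fun x : E3 => ‖gradUF f x‖ ^ 2) volume
      · have hne : ∀ᵐ x : E3 ∂volume, x ≠ 0 := by
          rw [ae_iff]
          have : {a : E3 | ¬ a ≠ 0} = {0} := by ext a; simp
          rw [this]
          exact measure_singleton 0
        have hgrad_eq : ∀ x : E3, x ≠ 0 →
            ‖gradUF f x‖ ^ 2 = (mF f ‖x‖) ^ 2 / ‖x‖ ^ 4 := by
          intro x hx
          have hxn : 0 < ‖x‖ := norm_pos_iff.2 hx
          rw [gradUF, norm_smul, Real.norm_eq_abs, mul_pow, sq_abs, div_pow]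
          field_simp
        have hin : ∫ x in closedBall (0:E3) R, ‖gradUF f x‖ ^ 2
            ≤ ∫ x in closedBall (0:E3) R, (2 * M * Ekin f / L₀) * (‖x‖ ^ 2)⁻¹ := by
          refine integral_mono_ae hB.integrableOn (hRint.const_mul _) ?_
          filter_upwards [ae_restrict_mem measurableSet_closedBall, ae_restrict_of_ae hne]
            with x hxb hx0
          have hxn : 0 < ‖x‖ := norm_pos_iff.2 hx0
          rw [hgrad_eq x hx0]
          have hub : (mF f ‖x‖) ^ 2 ≤ M * ((‖x‖ ^ 2 / L₀) * (2 * Ekin f)) := by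
            have := mul_le_mul (hmM ‖x‖) (hmE ‖x‖) (hm0 ‖x‖) hM.le
            nlinarith [hm0 ‖x‖]
          calc (mF f ‖x‖) ^ 2 / ‖x‖ ^ 4
              = (mF f ‖x‖) ^ 2 * (‖x‖ ^ 4)⁻¹ := div_eq_mul_inv _ _
            _ ≤ (M * ((‖x‖ ^ 2 / L₀) * (2 * Ekin f))) * (‖x‖ ^ 4)⁻¹ :=
                mul_le_mul_of_nonneg_right hub (by positivity)
            _ = (2 * M * Ekin f / L₀) * (‖x‖ ^ 2)⁻¹ := by
                field_simp
        have hin2 : ∫ x in closedBall (0:E3) R, (2 * M * Ekin f / L₀) * (‖x‖ ^ 2)⁻¹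
            ≤ 2 * π * Ekin f := by
          rw [integral_const_mul]
          have hcoef2 : 0 ≤ 2 * M * Ekin f / L₀ := by positivity
          calc (2 * M * Ekin f / L₀) * ∫ x in closedBall (0:E3) R, (‖x‖ ^ 2)⁻¹
              ≤ (2 * M * Ekin f / L₀) * (π * L₀ / M) :=
                mul_le_mul_of_nonneg_left hRval hcoef2
            _ = 2 * π * Ekin f := by field_simp
        have hout : ∫ x in (closedBall (0:E3) R)ᶜ, ‖gradUF f x‖ ^ 2
            ≤ ∫ x in (closedBall (0:E3) R)ᶜ, (M ^ 2 * cR) * ψ x := by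
          refine integral_mono_ae hB.integrableOn ((hψint.const_mul _).integrableOn) ?_
          filter_upwards [ae_restrict_mem measurableSet_closedBall.compl] with x hxc
          have hxR : R ≤ ‖x‖ := by
            have : ¬ dist x 0 ≤ R := hxc
            rw [dist_zero_right] at this
            linarith [not_le.1 this]
          have hx0 : x ≠ 0 := by
            intro h
            rw [h] at hxR
            simp at hxR
            linarith
          rw [hgrad_eq x hx0]
          have h1 : (mF f ‖x‖) ^ 2 / ‖x‖ ^ 4 ≤ M ^ 2 * (‖x‖ ^ 4)⁻¹ := by
            rw [div_eq_mul_inv]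
            refine mul_le_mul_of_nonneg_right ?_ (by positivity)
            nlinarith [hmM ‖x‖, hm0 ‖x‖]
          refine h1.trans ?_
          have h2 := outer_ptwise hR0 hxR
          calc M ^ 2 * (‖x‖ ^ 4)⁻¹ ≤ M ^ 2 * (cR * ψ x) := by
                refine mul_le_mul_of_nonneg_left ?_ (by positivity)
                simpa [hcR, hψ] using h2
            _ = (M ^ 2 * cR) * ψ x := by ring
        have hout2 : ∫ x in (closedBall (0:E3) R)ᶜ, (M ^ 2 * cR) * ψ x
            ≤ (M ^ 2 * cR) * Jψ := by
          rw [integral_const_mul]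
          refine mul_le_mul_of_nonneg_left ?_ (by positivity)
          exact setIntegral_le_integral hψint (ae_of_all _ hψnn)
        have hsplit : (∫ x, ‖gradUF f x‖ ^ 2)
            = (∫ x in closedBall (0:E3) R, ‖gradUF f x‖ ^ 2)
              + ∫ x in (closedBall (0:E3) R)ᶜ, ‖gradUF f x‖ ^ 2 :=
          (integral_add_compl measurableSet_closedBall hB).symm
        have hBle : (∫ x, ‖gradUF f x‖ ^ 2) ≤ 2 * π * Ekin f + M ^ 2 * cR * Jψ := by
          rw [hsplit]
          have := hin.trans hin2
          have := hout.trans hout2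
          linarith
        calc (1/(8*π)) * (∫ x, ‖gradUF f x‖ ^ 2)
            ≤ (1/(8*π)) * (2 * π * Ekin f + M ^ 2 * cR * Jψ) :=
              mul_le_mul_of_nonneg_left hBle hcoef
          _ = (1/4) * Ekin f + (1/(8*π)) * (M ^ 2 * cR * Jψ) := by
              field_simp
              ring
      · rw [integral_undef hB, mul_zero]
        have h1 : 0 ≤ (1/(8*π)) * (M^2 * cR * Jψ) :=
          mul_nonneg hcoef (mul_nonneg (by positivity) hJψ)
        have h2 : 0 ≤ (1/4) * Ekin f := by linarith
        linarith
    -- conclusion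
    have hEpot : Epot M_c f = -(1 / (8 * π)) * (∫ x, ‖gradUF f x‖ ^ 2)
        - ∫ x, (M_c / ‖x‖) * rhoF f x := rfl
    have hHC : HC k l L₀ M_c f = Ekin f + Epot M_c f + Cas k l L₀ f := rfl
    rw [ge_iff_le, hHC, hEpot, hC]
    nlinarith [claimA, claimB]

  refine ⟨C, hC0, main, ⟨(1/2) * 0 - C, ?_⟩⟩
  rintro y ⟨f, hfFM, rfl⟩
  have h := main f hfFM
  have hEk : 0 ≤ Ekin f := by
    obtain ⟨_, hnn, _⟩ := hfFM
    exact mul_nonneg (by norm_num)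
      (integral_nonneg fun x => integral_nonneg fun v => mul_nonneg (by positivity) (hnn x v))
  have hCa : 0 ≤ Cas k l L₀ f := by
    obtain ⟨_, hnn, _⟩ := hfFM
    exact integral_nonneg fun x => integral_nonneg fun v =>
      mul_nonneg (Real.rpow_nonneg (hnn x v) _) (Real.rpow_nonneg (le_max_right _ _) _)
  have : (1/2) * 0 - C ≤ (1/2) * (Ekin f + Cas k l L₀ f) - C := by nlinarith
  exact this.trans h

end Main
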